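/- arXiv:0810.1639 — 4 statements merged into one kernel-verified Lean document; each statement's English description precedes it below -/
import Mathlib

section
/- In the greedy partition of a sequence into increasing lists, every element placed by the greedy algorithm into list L_k with k ≥ 2 is smaller than some earlier element placed into list L_{k-1}; consequently, if the greedy algorithm creates u lists, then the sequence has a strictly decreasing subsequence of length u. -/
/-- One step of the greedy patience algorithm: append `x` to the first list whose
last element is smaller than `x`, or start a new list. Lists are kept in order of
creation and each list stores its elements in arrival order. -/
def greedyStep (x : ℕ) : List (List ℕ) → List (List ℕ)
  | [] => [[x]]
  | L :: rest => if L.getLastI < x then (L ++ [x]) :: rest else L :: greedyStep x rest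

/-- Greedy partition of a sequence into increasing lists `L₁, L₂, …`. -/
def greedy (A : List ℕ) : List (List ℕ) := A.foldl (fun s x => greedyStep x s) []

/-- `LDS(A)`: length of the longest strictly decreasing subsequence of `A`. -/
noncomputable def ldsL (A : List ℕ) : ℕ :=
  sSup {m | ∃ l : List ℕ, l.Sublist A ∧ l.Pairwise (· > ·) ∧ l.length = m}

/-- `A` can be partitioned (via a coloring of positions) into `k` strictly
increasing subsequences. -/
def SUSleL (A : List ℕ) (k : ℕ) : Prop :=
  ∃ c : ℕ → ℕ, (∀ i < A.length, c i < k) ∧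
    ∀ i j, i < j → j < A.length → c i = c j → A.getD i 0 < A.getD j 0

/-- `SUS(A)`: minimum number of increasing subsequences partitioning `A`. -/
noncomputable def susL (A : List ℕ) : ℕ := sInf {k | SUSleL A k}

/-- Least positive integer not occurring in `P` (the ACK value after receiving `P`). -/
noncomputable def ackL (P : List ℕ) : ℕ := sInf {k | 0 < k ∧ k ∉ P}

/-- Maximum of a list of naturals (0 for the empty list). -/
def maxL (P : List ℕ) : ℕ := P.foldr max 0

/-- Buffer size after receiving the packets `P`: `max P - (ackL P - 1)`. -/
noncomputable def bufL (P : List ℕ) : ℤ := (maxL P : ℤ) - ackL P + 1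

/-!
When `x` is placed in list `L_{k+1}`, the last element of `L_k` was not smaller than `x`, and
it is an earlier element of the (duplicate-free) sequence, so it is larger than `x`. This link
between consecutive lists survives later steps, since lists only grow. Following the links back
from any element of the last list yields a chain that is decreasing in value and increasing in
position, one element per list; ordered by position, it is a subsequence.
-/

open List

theorem List.sublist_of_pairwise_idxOf_lt {α : Type*} [BEq α] [LawfulBEq α] {l A : List α}
    (hmem : l ⊆ A) (h : l.Pairwise fun a b => A.idxOf a < A.idxOf b) : l <+ A := by
  have hidx : l.map A.idxOf <+ range A.length := by
    have hsorted : (l.map A.idxOf).Pairwise (· < ·) := pairwise_map.2 h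
    refine sublist_of_subperm_of_pairwise (subperm_of_subset hsorted.nodup ?_) hsorted
      pairwise_lt_range
    intro i hi
    obtain ⟨a, ha, rfl⟩ := mem_map.1 hi
    exact mem_range.2 (idxOf_lt_length_of_mem (hmem ha))
  have hl : (l.map A.idxOf).map (A[·]?) = l.map some := by
    simp only [map_map]
    exact map_congr_left fun a ha => by simp [hmem ha]
  have hA : (range A.length).map (A[·]?) = A.map some := ext_getElem (by simp) (by simp)
  have hsome := hidx.map (A[·]?)
  rw [hl, hA] at hsome
  simpa using hsome.filterMap id

section Dominates

variable {α : Type*}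

def Dominates (R : α → α → Prop) (L₀ L₁ : List α) : Prop :=
  ∀ x ∈ L₁, ∃ y ∈ L₀, R y x

variable {R S : α → α → Prop} {L₀ L₀' L₁ L₂ : List α}

theorem Dominates.imp (h : ∀ ⦃a b⦄, R a b → S a b) (hd : Dominates R L₀ L₁) :
    Dominates S L₀ L₁ :=
  fun x hx => (hd x hx).imp fun _ ⟨hy, hyx⟩ => ⟨hy, h hyx⟩

theorem Dominates.mono_left (h : L₀ ⊆ L₀') (hd : Dominates R L₀ L₁) : Dominates R L₀' L₁ :=
  fun x hx => (hd x hx).imp fun _ ⟨hy, hyx⟩ => ⟨h hy, hyx⟩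

theorem Dominates.append (h₁ : Dominates R L₀ L₁) (h₂ : Dominates R L₀ L₂) :
    Dominates R L₀ (L₁ ++ L₂) :=
  fun x hx => (mem_append.1 hx).elim (h₁ x) (h₂ x)

variable [IsTrans α R] {s : List (List α)}

theorem exists_pairwise_of_isChain_dominates (h : List.IsChain (Dominates R) s) :
    ∀ k (hk : k < s.length), ∀ x ∈ s[k],
      ∃ l : List α, l.length = k ∧ l ⊆ s.flatten ∧ (l ++ [x]).Pairwise R := by
  intro k
  induction k with
  | zero => exact fun _ x _ => ⟨[], rfl, nil_subset _, pairwise_singleton R x⟩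
  | succ k ih =>
    intro hk x hx
    obtain ⟨y, hy, hyx⟩ := isChain_iff_getElem.1 h k hk x hx
    obtain ⟨l, hlen, hsub, hpw⟩ := ih (by omega) y hy
    refine ⟨l ++ [y], by simp [hlen],
      append_subset.2 ⟨hsub, cons_subset.2 ⟨mem_flatten_of_mem (getElem_mem _) hy, nil_subset _⟩⟩, ?_⟩
    refine pairwise_append.2 ⟨hpw, pairwise_singleton R x, fun a ha x' hx' => ?_⟩
    rw [mem_singleton] at hx'
    subst hx'
    rcases mem_append.1 ha with ha | ha
    · exact _root_.trans ((pairwise_append.1 hpw).2.2 a ha y (mem_singleton_self y)) hyx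
    · rwa [mem_singleton.1 ha]

theorem exists_pairwise_length_eq_of_isChain_dominates (h : List.IsChain (Dominates R) s)
    (hne : ∀ L ∈ s, L ≠ []) : ∃ l : List α, l.length = s.length ∧ l ⊆ s.flatten ∧ l.Pairwise R := by
  rcases Nat.eq_zero_or_pos s.length with h0 | hpos
  · exact ⟨[], h0.symm, nil_subset _, Pairwise.nil⟩
  have hlast : s.length - 1 < s.length := by omega
  obtain ⟨x, hx⟩ := exists_mem_of_ne_nil _ (hne _ (getElem_mem hlast))
  obtain ⟨l, hlen, hsub, hpw⟩ := exists_pairwise_of_isChain_dominates h _ hlast x hx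
  exact ⟨l ++ [x], by simp; omega,
    append_subset.2 ⟨hsub, cons_subset.2 ⟨mem_flatten_of_mem (getElem_mem _) hx, nil_subset _⟩⟩, hpw⟩

end Dominates

def EarlierAndLarger (A : List ℕ) (y x : ℕ) : Prop :=
  A.idxOf y < A.idxOf x ∧ x < y

instance (A : List ℕ) : IsTrans ℕ (EarlierAndLarger A) :=
  ⟨fun _ _ _ h₁ h₂ => ⟨h₁.1.trans h₂.1, h₂.2.trans h₁.2⟩⟩

section Greedy

variable {A : List ℕ} {x : ℕ}

-- `y` occurs in `A`, so appending keeps its index, while the index of `z` can only grow.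
theorem EarlierAndLarger.append (B : List ℕ) {y z : ℕ} (h : EarlierAndLarger A y z) :
    EarlierAndLarger (A ++ B) y z := by
  have hy : y ∈ A := idxOf_lt_length_iff.1 (h.1.trans_le idxOf_le_length)
  refine ⟨?_, h.2⟩
  rw [idxOf_append_of_mem hy]
  by_cases hz : z ∈ A
  · rw [idxOf_append_of_mem hz]
    exact h.1
  · rw [idxOf_append_of_notMem hz]
    exact (idxOf_lt_length_of_mem hy).trans_le (Nat.le_add_right _ _)

theorem dominates_singleton_of_not_getLastI_lt {P : List ℕ} (hP : P ≠ []) (hPA : P ⊆ A)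
    (hx : x ∉ A) (hPx : ¬ P.getLastI < x) : Dominates (EarlierAndLarger (A ++ [x])) P [x] := by
  intro x' hx'
  rw [mem_singleton] at hx'
  subst hx'
  have hlast : P.getLast hP ∈ A := hPA (getLast_mem hP)
  refine ⟨P.getLast hP, getLast_mem hP, ?_, ?_⟩
  · rw [idxOf_append_of_mem hlast, idxOf_append_of_notMem hx]
    simpa using idxOf_lt_length_of_mem hlast
  · rw [getLastI_eq_getLast?_getD, getLast?_eq_some_getLast hP, Option.getD_some] at hPx
    exact lt_of_le_of_ne (not_lt.1 hPx) fun h => hx (h ▸ hlast)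

theorem isChain_append_head {L : List ℕ} {s : List (List ℕ)}
    (h : List.IsChain (Dominates (EarlierAndLarger A)) (L :: s)) :
    List.IsChain (Dominates (EarlierAndLarger (A ++ [x]))) ((L ++ [x]) :: s) :=
  (h.imp fun _ _ => Dominates.imp fun _ _ => EarlierAndLarger.append [x]).imp_head
    fun hd => hd.mono_left (subset_append_left _ _)

theorem isChain_cons_greedyStep {P : List ℕ} {s : List (List ℕ)}
    (hchain : List.IsChain (Dominates (EarlierAndLarger A)) (P :: s)) (hne : ∀ L ∈ P :: s, L ≠ [])
    (hsub : ∀ L ∈ P :: s, L ⊆ A) (hx : x ∉ A) (hPx : ¬ P.getLastI < x) :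
    List.IsChain (Dominates (EarlierAndLarger (A ++ [x]))) (P :: greedyStep x s) := by
  induction s generalizing P with
  | nil =>
    exact isChain_pair.2 (dominates_singleton_of_not_getLastI_lt (hne P mem_cons_self)
      (hsub P mem_cons_self) hx hPx)
  | cons L rest ih =>
    rw [forall_mem_cons] at hne hsub
    rw [isChain_cons_cons] at hchain
    have hP := dominates_singleton_of_not_getLastI_lt hne.1 hsub.1 hx hPx
    have hPL := hchain.1.imp fun _ _ => EarlierAndLarger.append [x]
    rw [greedyStep]
    split_ifs with hLx
    · exact isChain_cons_cons.2 ⟨hPL.append hP, isChain_append_head hchain.2⟩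
    · exact isChain_cons_cons.2 ⟨hPL, ih hchain.2 hne.2 hsub.2 hLx⟩

theorem isChain_greedyStep {s : List (List ℕ)} (hchain : List.IsChain (Dominates (EarlierAndLarger A)) s)
    (hne : ∀ L ∈ s, L ≠ []) (hsub : ∀ L ∈ s, L ⊆ A) (hx : x ∉ A) :
    List.IsChain (Dominates (EarlierAndLarger (A ++ [x]))) (greedyStep x s) := by
  cases s with
  | nil => exact isChain_singleton _
  | cons L rest =>
    rw [greedyStep]
    split_ifs with hLx
    · exact isChain_append_head hchain
    · exact isChain_cons_greedyStep hchain hne hsub hx hLx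

theorem ne_nil_of_mem_greedyStep {s : List (List ℕ)} (hne : ∀ L ∈ s, L ≠ []) :
    ∀ L ∈ greedyStep x s, L ≠ [] := by
  induction s with
  | nil => simp [greedyStep]
  | cons L rest ih =>
    rw [greedyStep]
    split_ifs <;> simp_all

theorem flatten_greedyStep_perm (x : ℕ) (s : List (List ℕ)) :
    (greedyStep x s).flatten ~ x :: s.flatten := by
  induction s with
  | nil => simp [greedyStep]
  | cons L rest ih =>
    rw [greedyStep]
    split_ifs
    · simp
    · simpa using (ih.append_left L).trans perm_middle

theorem greedy_append_singleton (A : List ℕ) (x : ℕ) :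
    greedy (A ++ [x]) = greedyStep x (greedy A) := by
  simp [greedy, foldl_append]

theorem flatten_greedy_perm (A : List ℕ) : (greedy A).flatten ~ A := by
  induction A using reverseRecOn with
  | nil => rfl
  | append_singleton A x ih =>
    rw [greedy_append_singleton]
    exact (flatten_greedyStep_perm x _).trans ((ih.cons x).trans (perm_append_singleton x A).symm)

theorem ne_nil_of_mem_greedy : ∀ L ∈ greedy A, L ≠ [] := by
  induction A using reverseRecOn with
  | nil => simp [greedy]
  | append_singleton A x ih =>
    rw [greedy_append_singleton]
    exact ne_nil_of_mem_greedyStep ih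

theorem subset_of_mem_greedy {L : List ℕ} (hL : L ∈ greedy A) : L ⊆ A :=
  fun _ ha => (flatten_greedy_perm A).subset (mem_flatten_of_mem hL ha)

theorem isChain_dominates_greedy (hA : A.Nodup) :
    List.IsChain (Dominates (EarlierAndLarger A)) (greedy A) := by
  induction A using reverseRecOn with
  | nil => simp [greedy]
  | append_singleton A x ih =>
    obtain ⟨hA, -, hx⟩ := nodup_append.1 hA
    rw [greedy_append_singleton]
    exact isChain_greedyStep (ih hA) ne_nil_of_mem_greedy
      (fun _ => subset_of_mem_greedy)
      fun hxA => hx x hxA x (mem_singleton_self x) rfl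

end Greedy

/-- every element placed by the greedy algorithm into list `L_{k+1}`
is smaller than some element of `L_k` that occurs earlier in `A`; consequently
there is a strictly decreasing subsequence of `A` of length equal to the number
of lists created. -/
theorem greedy_link_and_decreasing (A : List ℕ) (hA : A.Nodup) :
    (∀ k, (hk : k + 1 < (greedy A).length) →
      ∀ x ∈ (greedy A)[k + 1]'hk, ∃ y ∈ (greedy A)[k]'(by omega),
        A.idxOf y < A.idxOf x ∧ x < y) ∧
    ∃ l : List ℕ, l.Sublist A ∧ l.Pairwise (· > ·) ∧ l.length = (greedy A).length := by
  have hchain := isChain_dominates_greedy hA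
  refine ⟨fun k hk => isChain_iff_getElem.1 hchain k hk, ?_⟩
  obtain ⟨l, hlen, hsub, hpw⟩ :=
    exists_pairwise_length_eq_of_isChain_dominates hchain ne_nil_of_mem_greedy
  exact ⟨l, sublist_of_pairwise_idxOf_lt (Subset.trans hsub (flatten_greedy_perm A).subset)
    (hpw.imp And.left), hpw.imp And.right, hlen⟩
end

section
/- Let A be a permutation with buffer sequence w = M(A). If w_i > w_{i-1} (the buffer grows at stage i), then the new element A_i satisfies A_i = y + (w_i - w_{i-1}), where y is the maximum of A_1,...,A_{i-1}; moreover A_i is the new maximum of the prefix of length i. -/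
/-- The set of values appearing in the first `i` entries of `A` (indices `1..i`). -/
def prefSet (A : ℕ → ℕ) (i : ℕ) : Finset ℕ := (Finset.Icc 1 i).image A

/-- `H_i`: the maximum value among the first `i` entries (0 for `i = 0`). -/
def hi (A : ℕ → ℕ) (i : ℕ) : ℕ := (prefSet A i).sup id

/-- `ACK_i`: the least positive integer not among the first `i` entries. -/
noncomputable def ackSeq (A : ℕ → ℕ) (i : ℕ) : ℕ := sInf {k | 0 < k ∧ k ∉ prefSet A i}

/-- The buffer size `M_i = H_i - (ACK_i - 1)`. -/
noncomputable def buf (A : ℕ → ℕ) (i : ℕ) : ℤ := (hi A i : ℤ) - ackSeq A i + 1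

/-- `A` restricted to `{1,...,n}` is a permutation of `{1,...,n}`. -/
def IsPermOn (A : ℕ → ℕ) (n : ℕ) : Prop := Set.BijOn A (Set.Icc 1 n) (Set.Icc 1 n)

/-- The positions `1..n` can be partitioned into `k` classes, each of which
induces a strictly increasing subsequence of `A`. -/
def SUSle (A : ℕ → ℕ) (n k : ℕ) : Prop :=
  ∃ c : ℕ → ℕ, (∀ i ∈ Finset.Icc 1 n, c i < k) ∧
    ∀ i j, i ∈ Finset.Icc 1 n → j ∈ Finset.Icc 1 n → i < j → c i = c j → A i < A j

/-- `SUS(A)`: minimum number of increasing subsequences partitioning `A₁,…,Aₙ`. -/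
noncomputable def sus (A : ℕ → ℕ) (n : ℕ) : ℕ := sInf {k | SUSle A n k}

/-- `LDS(A)`: maximum length of a strictly decreasing subsequence of `A₁,…,Aₙ`. -/
noncomputable def lds (A : ℕ → ℕ) (n : ℕ) : ℕ :=
  sSup {m | ∃ s : Fin m → ℕ, StrictMono s ∧ (∀ t, s t ∈ Finset.Icc 1 n) ∧
    ∀ t u : Fin m, t < u → A (s u) < A (s t)}

/-!
`ACK` never decreases, so the buffer `H - ACK + 1` can only grow if `H` grows, i.e. if the new
entry `A i` is a new maximum. `ACK` can only move if `A i` is the old `ACK`, which is at most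
`H_{i-1} + 1`; a new maximum equal to it is `H_{i-1} + 1`, and then the buffer stays empty.
Hence `ACK` is unchanged and the growth of the buffer is exactly `A i - H_{i-1}`.
-/

lemma prefSet_succ (A : ℕ → ℕ) (j : ℕ) :
    prefSet A (j + 1) = insert (A (j + 1)) (prefSet A j) := by
  have hIcc : Finset.Icc 1 (j + 1) = insert (j + 1) (Finset.Icc 1 j) :=
    (Finset.insert_Icc_right_eq_Icc_succ (Nat.le_add_left 1 j)).symm
  rw [prefSet, prefSet, hIcc, Finset.image_insert]

lemma prefSet_mono (A : ℕ → ℕ) : Monotone (prefSet A) :=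
  fun _ _ hij => Finset.image_subset_image (Finset.Icc_subset_Icc_right hij)

lemma hi_succ (A : ℕ → ℕ) (j : ℕ) : hi A (j + 1) = max (A (j + 1)) (hi A j) := by
  rw [hi, prefSet_succ, Finset.sup_insert]
  rfl

lemma le_hi_of_mem {A : ℕ → ℕ} {j x : ℕ} (hx : x ∈ prefSet A j) : x ≤ hi A j :=
  Finset.le_sup (f := id) hx

lemma hi_add_one_notMem (A : ℕ → ℕ) (j : ℕ) : hi A j + 1 ∉ prefSet A j :=
  fun hmem => (le_hi_of_mem hmem).not_gt (Nat.lt_succ_self _)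

lemma ackSeq_pos_and_notMem (A : ℕ → ℕ) (j : ℕ) :
    0 < ackSeq A j ∧ ackSeq A j ∉ prefSet A j :=
  Nat.sInf_mem (s := {k | 0 < k ∧ k ∉ prefSet A j})
    ⟨hi A j + 1, Nat.succ_pos _, hi_add_one_notMem A j⟩

lemma ackSeq_le_of_notMem {A : ℕ → ℕ} {j k : ℕ} (hk : 0 < k) (hkA : k ∉ prefSet A j) :
    ackSeq A j ≤ k :=
  Nat.sInf_le ⟨hk, hkA⟩

lemma ackSeq_le_hi_add_one (A : ℕ → ℕ) (j : ℕ) : ackSeq A j ≤ hi A j + 1 :=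
  ackSeq_le_of_notMem (Nat.succ_pos _) (hi_add_one_notMem A j)

lemma ackSeq_mono (A : ℕ → ℕ) : Monotone (ackSeq A) := fun _ _ hij =>
  ackSeq_le_of_notMem (ackSeq_pos_and_notMem A _).1 fun hmem =>
    (ackSeq_pos_and_notMem A _).2 (prefSet_mono A hij hmem)

lemma ackSeq_succ_eq_or (A : ℕ → ℕ) (j : ℕ) :
    ackSeq A (j + 1) = ackSeq A j ∨ A (j + 1) = ackSeq A j := by
  obtain ⟨hpos, hnotMem⟩ := ackSeq_pos_and_notMem A j
  by_cases hmem : ackSeq A j ∈ prefSet A (j + 1)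
  · rw [prefSet_succ, Finset.mem_insert] at hmem
    exact Or.inr (hmem.resolve_right hnotMem).symm
  · exact Or.inl <|
      (ackSeq_le_of_notMem hpos hmem).antisymm (ackSeq_mono A (Nat.le_add_right j 1))

section Growth

variable {A : ℕ → ℕ} {j : ℕ} (hgrow : buf A j < buf A (j + 1))
include hgrow

lemma hi_lt_hi_succ_of_buf_lt : hi A j < hi A (j + 1) := by
  have := ackSeq_mono A (Nat.le_add_right j 1)
  unfold buf at hgrow
  omega

lemma eq_hi_succ_of_buf_lt : A (j + 1) = hi A (j + 1) := by
  have := hi_lt_hi_succ_of_buf_lt hgrow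
  rw [hi_succ] at this ⊢
  omega

lemma ackSeq_succ_eq_of_buf_lt : ackSeq A (j + 1) = ackSeq A j := by
  refine (ackSeq_succ_eq_or A j).resolve_right fun hnew => ?_
  have hmax := eq_hi_succ_of_buf_lt hgrow
  have hlt := hi_lt_hi_succ_of_buf_lt hgrow
  have hold := ackSeq_le_hi_add_one A j
  have hnew_le := ackSeq_le_hi_add_one A (j + 1)
  have hne : ackSeq A (j + 1) ≠ A (j + 1) := fun h =>
    (ackSeq_pos_and_notMem A (j + 1)).2 (h ▸ prefSet_succ A j ▸ Finset.mem_insert_self _ _)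
  have hmono := ackSeq_mono A (Nat.le_add_right j 1)
  unfold buf at hgrow
  omega

end Growth

theorem buffer_grows_general (n : ℕ) (A : ℕ → ℕ)
    (i : ℕ) (hi1 : i ∈ Finset.Icc 1 n) (hgrow : buf A (i - 1) < buf A i) :
    (A i : ℤ) = (hi A (i - 1) : ℤ) + (buf A i - buf A (i - 1)) ∧ A i = hi A i := by
  obtain ⟨j, rfl⟩ := Nat.exists_eq_add_of_le' (Finset.mem_Icc.mp hi1).1
  rw [Nat.add_sub_cancel] at hgrow ⊢
  have hmax := eq_hi_succ_of_buf_lt hgrow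
  have hack := ackSeq_succ_eq_of_buf_lt hgrow
  refine ⟨?_, hmax⟩
  unfold buf
  omega

/-- if the buffer grows at stage `i`, the new element is
`y + (w_i - w_{i-1})` where `y` is the previous running maximum, and it is the
new maximum of the prefix of length `i`. -/
theorem buffer_grows (n : ℕ) (A : ℕ → ℕ) (hA : IsPermOn A n)
    (i : ℕ) (hi1 : i ∈ Finset.Icc 1 n) (hgrow : buf A (i - 1) < buf A i) :
    (A i : ℤ) = (hi A (i - 1) : ℤ) + (buf A i - buf A (i - 1)) ∧ A i = hi A i :=
  buffer_grows_general n A i hi1 hgrow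
end

section
/- Let A be a permutation with SUS(A) ≤ 3, and run the greedy increasing-list partition on A. If element A_i is placed into the third list L_3, then A_i = ACK_{i-1}, i.e., A_i is the least positive integer not among A_1,...,A_{i-1}; equivalently, the buffer shrinks at stage i (M_i < M_{i-1}). -/
/-!
Along the greedy algorithm, every element of the `j`-th list (counting from `0`) is the last
term of a strictly decreasing subsequence of length `j + 1` of the prefix read so far: an
element moves past a list only when it is smaller than that list's last element. So `A_i`,
placed in the third list, ends a decreasing subsequence `a > b > A_i` of `A_1, …, A_i`. A value
`k < A_i` still missing would arrive later and extend it to a decreasing subsequence of length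
four, whose entries need four distinct increasing lists, contradicting `SUS(A) ≤ 3`. Hence
`A_i = ACK_{i-1}`; the ACK then jumps past `A_i` while the maximum stays put (`a > A_i` has
already arrived), so the buffer shrinks.
-/

theorem List.getLastI_mem {α : Type*} [Inhabited α] {l : List α} (h : l ≠ []) :
    l.getLastI ∈ l := by
  rw [List.getLastI_eq_getLast?_getD, List.getLast?_eq_some_getLast h]
  exact List.getLast_mem h

theorem List.take_eq_take_pred_concat_getD {α : Type*} (l : List α) (d : α) {i : ℕ}
    (h1 : 1 ≤ i) (hi : i ≤ l.length) : l.take i = l.take (i - 1) ++ [l.getD (i - 1) d] := by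
  conv_lhs => rw [← Nat.sub_add_cancel h1]
  rw [← List.take_concat_get' l (i - 1) (by omega), List.getD_eq_getElem l d (by omega)]

theorem List.pairwise_gt_concat_of_lt {α : Type*} [Preorder α] {l : List α} {x y : α}
    (h : (l ++ [y]).Pairwise (· > ·)) (hxy : x < y) : (l ++ [y] ++ [x]).Pairwise (· > ·) := by
  refine List.pairwise_append.mpr ⟨h, List.pairwise_singleton _ _, fun a ha b hb => ?_⟩
  rw [List.mem_singleton] at hb
  subst hb
  rcases List.mem_append.mp ha with ha | ha
  · exact hxy.trans ((List.pairwise_append.mp h).2.2 a ha y (List.mem_singleton_self y))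
  · rw [List.mem_singleton] at ha; exact ha ▸ hxy

def EndsDecreasingSublist (P : List ℕ) (m y : ℕ) : Prop :=
  ∃ l : List ℕ, l.length = m ∧ (l ++ [y]).Sublist P ∧ (l ++ [y]).Pairwise (· > ·)

namespace EndsDecreasingSublist

variable {P : List ℕ} {m x y : ℕ}

theorem append (h : EndsDecreasingSublist P m y) (Q : List ℕ) :
    EndsDecreasingSublist (P ++ Q) m y :=
  let ⟨l, hlen, hsub, hdec⟩ := h
  ⟨l, hlen, hsub.trans (List.sublist_append_left P Q), hdec⟩

theorem concat_of_lt (h : EndsDecreasingSublist P m y) (hxy : x < y) :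
    EndsDecreasingSublist (P ++ [x]) (m + 1) x := by
  obtain ⟨l, hlen, hsub, hdec⟩ := h
  exact ⟨l ++ [y], by simp [hlen], hsub.append (List.Sublist.refl _),
    List.pairwise_gt_concat_of_lt hdec hxy⟩

theorem exists_mem_gt (h : EndsDecreasingSublist (P ++ [x]) m x) (hm : 0 < m) :
    ∃ y ∈ P, x < y := by
  obtain ⟨l, hlen, hsub, hdec⟩ := h
  obtain ⟨y, hy⟩ := List.exists_mem_of_length_pos (hlen ▸ hm)
  exact ⟨y, ((List.append_sublist_append_right _).mp hsub).subset hy,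
    (List.pairwise_append.mp hdec).2.2 y hy x (List.mem_singleton_self x)⟩

end EndsDecreasingSublist

/-- `d` is the index that the first list of `s` has in the whole greedy state, since
`greedyStep` recurses into the tail. -/
def EntriesEndDecreasing (P : List ℕ) : ℕ → List (List ℕ) → Prop
  | _, [] => True
  | d, L :: s =>
    L ≠ [] ∧ (∀ y ∈ L, EndsDecreasingSublist P d y) ∧ EntriesEndDecreasing P (d + 1) s

namespace EntriesEndDecreasing

variable {P : List ℕ} {d : ℕ} {s : List (List ℕ)}

theorem append (h : EntriesEndDecreasing P d s) (Q : List ℕ) :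
    EntriesEndDecreasing (P ++ Q) d s := by
  induction s generalizing d with
  | nil => trivial
  | cons L s ih =>
    obtain ⟨hL, hLdec, hs⟩ := h
    exact ⟨hL, fun y hy => (hLdec y hy).append Q, ih hs⟩

theorem greedyStep {x : ℕ} (hx : x ∉ P) (h : EntriesEndDecreasing P d s)
    (hxd : EndsDecreasingSublist (P ++ [x]) d x) :
    EntriesEndDecreasing (P ++ [x]) d (greedyStep x s) := by
  induction s generalizing d with
  | nil => exact ⟨List.cons_ne_nil x [], by simpa using hxd, trivial⟩
  | cons L s ih =>
    obtain ⟨hL, hLdec, hs⟩ := h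
    by_cases hlt : L.getLastI < x
    · rw [_root_.greedyStep, if_pos hlt]
      refine ⟨by simp, fun y hy => ?_, hs.append [x]⟩
      rcases List.mem_append.mp hy with hy | hy
      · exact (hLdec y hy).append [x]
      · rw [List.mem_singleton] at hy; exact hy ▸ hxd
    · rw [_root_.greedyStep, if_neg hlt]
      have hdec := hLdec _ (List.getLastI_mem hL)
      have hxlast : x < L.getLastI := by
        obtain ⟨l, -, hsub, -⟩ := hdec
        have : L.getLastI ∈ P := hsub.subset (by simp)
        exact lt_of_le_of_ne (not_lt.mp hlt) (fun h => hx (h ▸ this))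
      exact ⟨hL, fun y hy => (hLdec y hy).append [x], ih hs (hdec.concat_of_lt hxlast)⟩

theorem getElem (h : EntriesEndDecreasing P d s) {j : ℕ} (hj : j < s.length) :
    s[j] ≠ [] ∧ ∀ y ∈ s[j], EndsDecreasingSublist P (d + j) y := by
  induction s generalizing d j with
  | nil => simp at hj
  | cons L s ih =>
    obtain ⟨hL, hLdec, hs⟩ := h
    cases j with
    | zero => exact ⟨hL, hLdec⟩
    | succ j =>
      simpa [Nat.add_right_comm d 1 j, Nat.add_assoc] using ih hs (j := j) (by simpa using hj)

end EntriesEndDecreasing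

theorem entriesEndDecreasing_greedy {P : List ℕ} (hP : P.Nodup) :
    EntriesEndDecreasing P 0 (greedy P) := by
  induction P using List.reverseRecOn with
  | nil => trivial
  | append_singleton P x ih =>
    rw [← List.concat_eq_append, List.nodup_concat] at hP
    rw [greedy, List.foldl_append, List.foldl_cons, List.foldl_nil]
    exact (ih hP.2).greedyStep hP.1 ⟨[], rfl, by simp, by simp⟩

theorem endsDecreasingSublist_getLastI_greedy {P : List ℕ} (hP : P.Nodup) {j : ℕ}
    (hj : j < (greedy P).length) : EndsDecreasingSublist P j (greedy P)[j].getLastI := by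
  obtain ⟨hne, hdec⟩ := (entriesEndDecreasing_greedy hP).getElem hj
  simpa using hdec _ (List.getLastI_mem hne)

theorem SUSleL_susL (A : List ℕ) : SUSleL A (susL A) :=
  Nat.sInf_mem (s := {k | SUSleL A k})
    ⟨A.length, id, fun _ hi => hi, fun _ _ hij _ h => absurd h hij.ne⟩

theorem SUSleL.length_le_of_sublist {A l : List ℕ} {k : ℕ} (h : SUSleL A k) (hl : l.Sublist A)
    (hdec : l.Pairwise (· > ·)) : l.length ≤ k := by
  obtain ⟨c, hc, hinc⟩ := h
  obtain ⟨is, rfl, his⟩ := List.sublist_eq_map_getElem hl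
  have hcolors : (is.map fun p : Fin A.length => c p).Nodup := by
    rw [List.pairwise_map] at hdec
    refine List.pairwise_map.mpr ((his.and hdec).imp fun {p q} h hcol => ?_)
    have := hinc p q h.1 q.isLt hcol
    rw [List.getD_eq_getElem _ _ p.isLt, List.getD_eq_getElem _ _ q.isLt] at this
    exact lt_asymm this h.2
  have hrange : (is.map fun p : Fin A.length => c p) ⊆ List.range k := by
    intro a ha
    obtain ⟨p, -, rfl⟩ := List.mem_map.mp ha
    exact List.mem_range.mpr (hc p p.isLt)
  simpa using (List.subperm_of_subset hcolors hrange).length_le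

theorem length_le_susL {A l : List ℕ} (hl : l.Sublist A) (hdec : l.Pairwise (· > ·)) :
    l.length ≤ susL A :=
  (SUSleL_susL A).length_le_of_sublist hl hdec

theorem mem_of_lt_of_endsDecreasingSublist {P Q : List ℕ} {m x k : ℕ}
    (hsus : susL (P ++ [x] ++ Q) ≤ m + 1) (hx : EndsDecreasingSublist (P ++ [x]) m x)
    (hkx : k < x) (hk : k ∈ P ++ [x] ++ Q) : k ∈ P := by
  obtain ⟨l, hlen, hsub, hdec⟩ := hx
  by_contra hkP
  have hkQ : k ∈ Q := by simpa [hkP, hkx.ne] using hk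
  have hchain : (l ++ [x] ++ [k]).Sublist (P ++ [x] ++ Q) :=
    hsub.append (List.singleton_sublist.mpr hkQ)
  have := length_le_susL hchain (List.pairwise_gt_concat_of_lt hdec hkx)
  simp only [List.length_append, List.length_singleton] at this
  omega

theorem exists_pos_not_mem (P : List ℕ) : ∃ k, 0 < k ∧ k ∉ P :=
  ⟨P.sum + 1, P.sum.succ_pos, fun h => by have := List.le_sum_of_mem h; omega⟩

theorem ackL_pos_not_mem (P : List ℕ) : 0 < ackL P ∧ ackL P ∉ P :=
  Nat.sInf_mem (exists_pos_not_mem P)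

theorem ackL_le {P : List ℕ} {k : ℕ} (hk : 0 < k) (hkP : k ∉ P) : ackL P ≤ k :=
  Nat.sInf_le ⟨hk, hkP⟩

theorem ackL_eq_of_forall_lt_mem {P : List ℕ} {x : ℕ} (hx : 0 < x) (hxP : x ∉ P)
    (h : ∀ k, 0 < k → k < x → k ∈ P) : ackL P = x := by
  obtain ⟨hpos, hnot⟩ := ackL_pos_not_mem P
  exact le_antisymm (ackL_le hx hxP) (not_lt.mp fun hlt => hnot (h _ hpos hlt))

theorem ackL_mono {P Q : List ℕ} (h : P ⊆ Q) : ackL P ≤ ackL Q := by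
  obtain ⟨hpos, hnot⟩ := ackL_pos_not_mem Q
  exact ackL_le hpos fun hP => hnot (h hP)

theorem ackL_lt_ackL_concat_ackL (P : List ℕ) : ackL P < ackL (P ++ [ackL P]) := by
  refine lt_of_le_of_ne (ackL_mono (List.subset_append_left _ _)) fun h => ?_
  exact (ackL_pos_not_mem (P ++ [ackL P])).2 (h ▸ by simp)

theorem maxL_concat (P : List ℕ) (x : ℕ) : maxL (P ++ [x]) = max (maxL P) x := by
  induction P with
  | nil => simp [maxL]
  | cons a P ih =>
    simp only [maxL, List.cons_append, List.foldr_cons] at ih ⊢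
    rw [ih, max_assoc]

theorem bufL_concat_ackL_lt {P : List ℕ} {y : ℕ} (hy : y ∈ P) (hle : ackL P ≤ y) :
    bufL (P ++ [ackL P]) < bufL P := by
  have hmax : maxL (P ++ [ackL P]) = maxL P :=
    (maxL_concat P _).trans (max_eq_left (hle.trans (List.le_max_of_le' 0 hy le_rfl)))
  have := ackL_lt_ackL_concat_ackL P
  simp only [bufL, hmax]
  omega

/-- for a permutation with `SUS(A) ≤ 3`, if `A_i` is placed by the
greedy algorithm into the third list `L_3`, then `A_i = ACK_{i-1}` (the least
positive integer missing from `A_1,…,A_{i-1}`) and the buffer shrinks at stage `i`. -/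
theorem third_list_forces_ack (n : ℕ) (A : List ℕ) (hA : A.Perm (List.range' 1 n))
    (hsus : susL A ≤ 3) (i : ℕ) (h1 : 1 ≤ i) (hn : i ≤ A.length)
    (h3 : 2 < (greedy (A.take i)).length)
    (hplace : ((greedy (A.take i))[2]'h3).getLastI = A.getD (i - 1) 0) :
    A.getD (i - 1) 0 = ackL (A.take (i - 1)) ∧
      bufL (A.take i) < bufL (A.take (i - 1)) := by
  set P := A.take (i - 1)
  set x := A.getD (i - 1) 0
  have hsplit : A.take i = P ++ [x] := A.take_eq_take_pred_concat_getD 0 h1 hn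
  have hnd : (A.take i).Nodup := (hA.nodup_iff.mpr List.nodup_range').sublist (A.take_sublist i)
  have hxP : x ∉ P := ((List.nodup_concat P x).mp (by rwa [List.concat_eq_append, ← hsplit])).1
  have hxd : EndsDecreasingSublist (P ++ [x]) 2 x := by
    rw [← hsplit, ← hplace]; exact endsDecreasingSublist_getLastI_greedy hnd h3
  have hA_split : A = P ++ [x] ++ A.drop i := by rw [← hsplit, List.take_append_drop]
  have hmem : ∀ k, k ∈ A ↔ 0 < k ∧ k < n + 1 := fun k => by
    rw [hA.mem_iff, List.mem_range'_1]; omega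
  obtain ⟨hx_pos, hx_lt⟩ := (hmem x).mp (hA_split ▸ by simp)
  have hack : ackL P = x := by
    refine ackL_eq_of_forall_lt_mem hx_pos hxP fun k hk hkx => ?_
    refine mem_of_lt_of_endsDecreasingSublist (hA_split ▸ hsus) hxd hkx ?_
    rw [← hA_split, hmem]
    omega
  obtain ⟨y, hyP, hxy⟩ := hxd.exists_mem_gt two_pos
  refine ⟨hack.symm, ?_⟩
  rw [hsplit, ← hack]
  exact bufL_concat_ackL_lt hyP (hack ▸ hxy.le)
end

section
/- The permutations A = (4,3,2,1) and B = (4,2,3,1) of {1,2,3,4} are distinct, satisfy SUS(A) = 4 and SUS(B) = 3, and have equal buffer sequences M(A) = M(B) = (4,4,4,0). Hence the uniqueness theorem for buffer sequences fails when the bound SUS ≤ 3 is relaxed to SUS ≤ 4. -/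
/-! A non-increasing subsequence must receive pairwise distinct colours, so its length bounds
`SUS` from below: `4,3,2,1` forces four parts, and `4,3,1` inside `4,2,3,1` forces three, which
`(4), (2,3), (1)` attains. The ACK value stays `1` until packet `1` arrives and then jumps to `5`,
so both buffer sequences are `4 - 1 + 1, …` followed by `4 - 5 + 1 = 0`. -/

lemma SUSleL.le_of_antitone {A : List ℕ} {k m : ℕ} (hA : SUSleL A k) (f : Fin m → ℕ)
    (hf : StrictMono f) (hlen : ∀ a, f a < A.length)
    (hdec : ∀ a b, a < b → A.getD (f b) 0 ≤ A.getD (f a) 0) : m ≤ k := by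
  obtain ⟨c, hck, hinc⟩ := hA
  have hne : ∀ a b, a < b → c (f a) ≠ c (f b) := fun a b hab hc =>
    (hinc _ _ (hf hab) (hlen b) hc).not_ge (hdec a b hab)
  have hinj : Function.Injective fun a => (⟨c (f a), hck _ (hlen a)⟩ : Fin k) := by
    intro a b hab
    simp only [Fin.mk.injEq] at hab
    rcases lt_trichotomy a b with h | h | h
    · exact absurd hab (hne a b h)
    · exact h
    · exact absurd hab.symm (hne b a h)
  simpa using Fintype.card_le_of_injective _ hinj

lemma SUSleL_length (A : List ℕ) : SUSleL A A.length :=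
  ⟨id, fun _ hi => hi, fun _ _ hij _ hc => absurd hc hij.ne⟩

lemma susL_eq_of_antitone {A : List ℕ} {m : ℕ} (hA : SUSleL A m) (f : Fin m → ℕ)
    (hf : StrictMono f) (hlen : ∀ a, f a < A.length)
    (hdec : ∀ a b, a < b → A.getD (f b) 0 ≤ A.getD (f a) 0) : susL A = m :=
  le_antisymm (Nat.sInf_le hA) (le_csInf ⟨m, hA⟩ fun _ hk => hk.le_of_antitone f hf hlen hdec)

lemma ackL_eq {P : List ℕ} {n : ℕ} (hn : 0 < n) (hnP : n ∉ P)
    (hlt : ∀ m, 0 < m → m < n → m ∈ P) : ackL P = n :=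
  le_antisymm (Nat.sInf_le ⟨hn, hnP⟩) (le_csInf ⟨n, hn, hnP⟩ fun m ⟨hm, hmP⟩ =>
    not_lt.mp fun h => hmP (hlt m hm h))

lemma ackL_eq_one {P : List ℕ} (h : 1 ∉ P) : ackL P = 1 :=
  ackL_eq one_pos h fun _ _ _ => by omega

lemma ackL_eq_succ_of_perm {P : List ℕ} {n : ℕ} (hP : P.Perm (List.range' 1 n)) :
    ackL P = n + 1 :=
  ackL_eq n.succ_pos (by simp [hP.mem_iff, add_comm]) fun m hm hmn => by
    rw [hP.mem_iff, List.mem_range'_1]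
    omega

lemma susL_4321 : susL [4, 3, 2, 1] = 4 :=
  susL_eq_of_antitone (SUSleL_length _) (fun a => a) (fun _ _ h => h) (by decide) (by decide)

lemma susL_4231 : susL [4, 2, 3, 1] = 3 := by
  refine susL_eq_of_antitone ⟨fun i => [0, 1, 1, 2].getD i 0, ?_, ?_⟩ ![0, 2, 3]
    (by decide) (by decide) (by decide)
  · intro i hi
    change i < 4 at hi
    interval_cases i <;> decide
  · intro i j hij hj _
    change j < 4 at hj
    interval_cases j <;> interval_cases i <;> simp_all

/-- `A = (4,3,2,1)` and `B = (4,2,3,1)` are distinct, have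
`SUS(A) = 4`, `SUS(B) = 3`, and equal buffer sequences `(4,4,4,0)`; so uniqueness
fails for `SUS ≤ 4`. -/
theorem counterexample_sus4 :
    ([4, 3, 2, 1] : List ℕ) ≠ [4, 2, 3, 1] ∧
    susL [4, 3, 2, 1] = 4 ∧ susL [4, 2, 3, 1] = 3 ∧
    (List.range 4).map (fun i => bufL (([4, 3, 2, 1] : List ℕ).take (i + 1))) =
      [4, 4, 4, 0] ∧
    (List.range 4).map (fun i => bufL (([4, 2, 3, 1] : List ℕ).take (i + 1))) =
      [4, 4, 4, 0] := by
  have ack_A : ackL [4, 3, 2, 1] = 5 := ackL_eq_succ_of_perm (by decide)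
  have ack_B : ackL [4, 2, 3, 1] = 5 := ackL_eq_succ_of_perm (by decide)
  refine ⟨by decide, susL_4321, susL_4231, ?_, ?_⟩
  · simp [List.range_succ, bufL, maxL, ackL_eq_one, ack_A]
  · simp [List.range_succ, bufL, maxL, ackL_eq_one, ack_B]
end
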